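/- arXiv:2005.11796 — 7 statements merged into one kernel-verified Lean document; each statement's English description precedes it below -/
import Mathlib

section
/- (First Welfare Theorem.) Let (S, p) be a Walrasian equilibrium of a market with finite agent set N and finite item set M. Then S maximizes social welfare: for every allocation S', ∑_{i∈N} v_i(S_i) ≥ ∑_{i∈N} v_i(S'_i). -/
/-!
Summing each agent's equilibrium inequality `v i (S' i) - p (S' i) ≤ v i (S i) - p (S i)`
shows that the utilities at `S` dominate those at `S'`. It remains to compare revenues:
the items sold under `S` carry every positive price, since unallocated items are free,
so with nonnegative prices no other allocation can raise more revenue.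
-/

open Finset

lemma Finset.sum_le_sum_of_eq_zero_of_notMem {α β : Type*} [DecidableEq α] [AddCommMonoid β]
    [PartialOrder β] [IsOrderedAddMonoid β] {s t : Finset α} {f : α → β}
    (hf : ∀ a ∈ t, 0 ≤ f a) (h : ∀ a ∈ s, a ∉ t → f a = 0) :
    ∑ a ∈ s, f a ≤ ∑ a ∈ t, f a :=
  calc ∑ a ∈ s, f a
      ≤ ∑ a ∈ s ∪ t, f a := sum_le_sum_of_subset_of_nonneg subset_union_left fun a ha has =>
        hf a ((mem_union.1 ha).resolve_left has)
    _ = ∑ a ∈ t, f a := (sum_subset subset_union_right fun a ha hat =>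
        h a ((mem_union.1 ha).resolve_right hat) hat).symm

lemma sum_sum_price_le_of_free {ι M : Type*} [Fintype ι] [DecidableEq M]
    {S S' : ι → Finset M} (hS : ∀ i i', i ≠ i' → Disjoint (S i) (S i'))
    (hS' : ∀ i i', i ≠ i' → Disjoint (S' i) (S' i')) {p : M → ℝ} (hp : ∀ j, 0 ≤ p j)
    (hfree : ∀ j, (∀ i, j ∉ S i) → p j = 0) :
    ∑ i, ∑ j ∈ S' i, p j ≤ ∑ i, ∑ j ∈ S i, p j := by
  rw [← sum_biUnion fun i _ i' _ h => hS' i i' h, ← sum_biUnion fun i _ i' _ h => hS i i' h]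
  refine sum_le_sum_of_eq_zero_of_notMem (fun j _ => hp j) fun j _ hj => hfree j fun i hi => ?_
  exact hj (mem_biUnion.2 ⟨i, mem_univ i, hi⟩)

theorem first_welfare_theorem_general {N M : Type*} [Fintype N] [DecidableEq M]
    (v : N → Finset M → ℝ)
    -- `S` is an allocation (pairwise disjoint bundles)
    (S : N → Finset M) (hS : ∀ i i', i ≠ i' → Disjoint (S i) (S i'))
    -- `p` is a nonnegative pricing
    (p : M → ℝ) (hp : ∀ j, 0 ≤ p j)
    -- Walrasian equilibrium condition (1): every agent's bundle maximizes her utility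
    (hmax : ∀ i (X : Finset M), v i X - ∑ j ∈ X, p j ≤ v i (S i) - ∑ j ∈ S i, p j)
    -- Walrasian equilibrium condition (2): unallocated items have price zero
    (hfree : ∀ j : M, (∀ i, j ∉ S i) → p j = 0)
    -- any other allocation `S'`
    (S' : N → Finset M) (hS' : ∀ i i', i ≠ i' → Disjoint (S' i) (S' i')) :
    ∑ i, v i (S' i) ≤ ∑ i, v i (S i) := by
  have utility : ∑ i, (v i (S' i) - ∑ j ∈ S' i, p j) ≤ ∑ i, (v i (S i) - ∑ j ∈ S i, p j) :=
    sum_le_sum fun i _ => hmax i (S' i)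
  have revenue := sum_sum_price_le_of_free hS hS' hp hfree
  rw [sum_sub_distrib, sum_sub_distrib] at utility
  linarith

/-- **First Welfare Theorem.** If `(S, p)` is a Walrasian equilibrium of a market with
finite agent set `N` and finite item set `M`, then the allocation `S` maximizes social
welfare among all allocations `S'`. -/
theorem first_welfare_theorem {N M : Type*} [Fintype N] [Fintype M] [DecidableEq M]
    (v : N → Finset M → ℝ)
    (hnorm : ∀ i, v i ∅ = 0) (hnonneg : ∀ i X, 0 ≤ v i X)
    -- `S` is an allocation (pairwise disjoint bundles)
    (S : N → Finset M) (hS : ∀ i i', i ≠ i' → Disjoint (S i) (S i'))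
    -- `p` is a nonnegative pricing
    (p : M → ℝ) (hp : ∀ j, 0 ≤ p j)
    -- Walrasian equilibrium condition (1): every agent's bundle maximizes her utility
    (hmax : ∀ i (X : Finset M), v i X - ∑ j ∈ X, p j ≤ v i (S i) - ∑ j ∈ S i, p j)
    -- Walrasian equilibrium condition (2): unallocated items have price zero
    (hfree : ∀ j : M, (∀ i, j ∉ S i) → p j = 0)
    -- any other allocation `S'`
    (S' : N → Finset M) (hS' : ∀ i i', i ≠ i' → Disjoint (S' i) (S' i')) :
    ∑ i, v i (S' i) ≤ ∑ i, v i (S i) :=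
  first_welfare_theorem_general v S hS p hp hmax hfree S' hS'
end

section
/- Let (S, p) be a Walrasian equilibrium of a market with finite agent set N and finite item set M, and let S' be any allocation with the same social welfare as S (equivalently, by the First Welfare Theorem, any welfare-maximizing allocation). Then (S', p) is also a Walrasian equilibrium. In particular, Walrasian equilibrium prices support every optimal allocation. -/
/-!
Summing the equilibrium inequalities `v i (S' i) - p (S' i) ≤ v i (S i) - p (S i)` over all
agents gives `SW(S') - ∑ i, p (S' i) ≤ SW(S) - ∑ j, p j`, because under `S` every priced item
is sold. With equal welfare and `∑ i, p (S' i) ≤ ∑ j, p j` this chain is tight, so every agent's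
inequality is an equality (each `S' i` is a demanded bundle) and `S'` also sells every priced
item.
-/

open Finset

namespace Finset

variable {ι β : Type*} [AddCommMonoid β] [PartialOrder β] [IsOrderedCancelAddMonoid β]

theorem sum_eq_sum_of_subset_iff_of_nonneg [DecidableEq ι] {s t : Finset ι} {f : ι → β}
    (hst : s ⊆ t) (hf : ∀ j ∈ t, 0 ≤ f j) :
    ∑ j ∈ s, f j = ∑ j ∈ t, f j ↔ ∀ j ∈ t \ s, f j = 0 := by
  rw [← sum_sdiff hst, right_eq_add,
    sum_eq_zero_iff_of_nonneg fun j hj ↦ hf j (mem_sdiff.1 hj).1]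

end Finset

section Pricing

variable {N M β : Type*} [Fintype N] [Fintype M] [AddCommMonoid β] [PartialOrder β]
  [IsOrderedCancelAddMonoid β] {S : N → Finset M} {p : M → β}

theorem sum_bundle_prices_le_sum_prices (hS : ∀ i i', i ≠ i' → Disjoint (S i) (S i'))
    (hp : ∀ j, 0 ≤ p j) :
    ∑ i, ∑ j ∈ S i, p j ≤ ∑ j, p j := by
  classical
  rw [← sum_biUnion fun i _ i' _ ↦ hS i i']
  exact sum_le_sum_of_subset_of_nonneg (subset_univ _) fun j _ _ ↦ hp j

theorem sum_bundle_prices_eq_sum_prices_iff (hS : ∀ i i', i ≠ i' → Disjoint (S i) (S i'))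
    (hp : ∀ j, 0 ≤ p j) :
    ∑ i, ∑ j ∈ S i, p j = ∑ j, p j ↔ ∀ j, (∀ i, j ∉ S i) → p j = 0 := by
  classical
  rw [← sum_biUnion fun i _ i' _ ↦ hS i i',
    sum_eq_sum_of_subset_iff_of_nonneg (subset_univ _) fun j _ ↦ hp j]
  simp

end Pricing

theorem walrasian_prices_support_every_optimal_allocation_general
    {N M : Type*} [Fintype N] [Fintype M]
    (v : N → Finset M → ℝ)
    -- `S` is an allocation (pairwise disjoint bundles)
    (S : N → Finset M) (hS : ∀ i i', i ≠ i' → Disjoint (S i) (S i'))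
    -- `p` is a nonnegative pricing
    (p : M → ℝ) (hp : ∀ j, 0 ≤ p j)
    -- `(S, p)` is a Walrasian equilibrium
    (hmax : ∀ i (X : Finset M), v i X - ∑ j ∈ X, p j ≤ v i (S i) - ∑ j ∈ S i, p j)
    (hfree : ∀ j : M, (∀ i, j ∉ S i) → p j = 0)
    -- `S'` is an allocation with the same social welfare as `S`
    (S' : N → Finset M) (hS' : ∀ i i', i ≠ i' → Disjoint (S' i) (S' i'))
    (hsw : ∑ i, v i (S' i) = ∑ i, v i (S i)) :
    (∀ i (X : Finset M), v i X - ∑ j ∈ X, p j ≤ v i (S' i) - ∑ j ∈ S' i, p j) ∧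
    (∀ j : M, (∀ i, j ∉ S' i) → p j = 0) := by
  have hpriceS := (sum_bundle_prices_eq_sum_prices_iff hS hp).2 hfree
  have hpriceS' := sum_bundle_prices_le_sum_prices hS' hp
  have hle : ∀ i ∈ univ, v i (S' i) - ∑ j ∈ S' i, p j ≤ v i (S i) - ∑ j ∈ S i, p j :=
    fun i _ ↦ hmax i (S' i)
  have hsum_ge : ∑ i, (v i (S i) - ∑ j ∈ S i, p j) ≤ ∑ i, (v i (S' i) - ∑ j ∈ S' i, p j) := by
    simp only [sum_sub_distrib]
    linarith
  have hsum_eq := (sum_le_sum hle).antisymm hsum_ge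
  have hutility := (sum_eq_sum_iff_of_le hle).1 hsum_eq
  refine ⟨fun i X ↦ (hmax i X).trans_eq (hutility i (mem_univ i)).symm,
    (sum_bundle_prices_eq_sum_prices_iff hS' hp).1 ?_⟩
  simp only [sum_sub_distrib] at hsum_eq
  linarith

/-- If `(S, p)` is a Walrasian equilibrium and `S'` is any allocation with the same social
welfare as `S` (equivalently, any welfare-maximizing allocation), then `(S', p)` is also a
Walrasian equilibrium: equilibrium prices support every optimal allocation. -/
theorem walrasian_prices_support_every_optimal_allocation
    {N M : Type*} [Fintype N] [Fintype M] [DecidableEq M]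
    (v : N → Finset M → ℝ)
    (hnorm : ∀ i, v i ∅ = 0) (hnonneg : ∀ i X, 0 ≤ v i X)
    -- `S` is an allocation (pairwise disjoint bundles)
    (S : N → Finset M) (hS : ∀ i i', i ≠ i' → Disjoint (S i) (S i'))
    -- `p` is a nonnegative pricing
    (p : M → ℝ) (hp : ∀ j, 0 ≤ p j)
    -- `(S, p)` is a Walrasian equilibrium
    (hmax : ∀ i (X : Finset M), v i X - ∑ j ∈ X, p j ≤ v i (S i) - ∑ j ∈ S i, p j)
    (hfree : ∀ j : M, (∀ i, j ∉ S i) → p j = 0)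
    -- `S'` is an allocation with the same social welfare as `S`
    (S' : N → Finset M) (hS' : ∀ i i', i ≠ i' → Disjoint (S' i) (S' i'))
    (hsw : ∑ i, v i (S' i) = ∑ i, v i (S i)) :
    (∀ i (X : Finset M), v i X - ∑ j ∈ X, p j ≤ v i (S' i) - ∑ j ∈ S' i, p j) ∧
    (∀ j : M, (∀ i, j ∉ S' i) → p j = 0) :=
  walrasian_prices_support_every_optimal_allocation_general v S hS p hp hmax hfree S' hS' hsw
end

section
/- Let S* be any fixed welfare-maximizing allocation of a market with finite agent set N and finite item set M. Then the market possesses a Walrasian equilibrium if and only if there exists a pricing p such that (S*, p) is a Walrasian equilibrium. (This justifies decomposing the problem of finding a Walrasian equilibrium into first finding an optimal allocation and then finding supporting prices for it.) -/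
/-!
Let `(S, p)` be a Walrasian equilibrium, `S'` an allocation with `SW(S) ≤ SW(S')`, and
`u_i(T) = v_i(T_i) - p(T_i)`. Since `p` vanishes off the items allocated by `S`,
`∑ u_i(S') ≤ ∑ u_i(S) = SW(S) - p(M) ≤ SW(S') - p(M) ≤ SW(S') - ∑ p(S'_i) = ∑ u_i(S')`,
the first step by each agent's demand condition. All these inequalities are therefore equalities:
each agent is indifferent between `S_i` and `S'_i`, so `S'_i` is demanded too, and the items
left unallocated by `S'` have total price zero.
-/

open Finset Function

section Pricing

variable {N M : Type*} [Fintype N] [Fintype M] {S : N → Finset M} {p : M → ℝ}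

theorem sum_sum_le_sum_univ (hS : Pairwise (Disjoint on S)) (hp : ∀ j, 0 ≤ p j) :
    ∑ i, ∑ j ∈ S i, p j ≤ ∑ j, p j := by
  classical
  rw [← sum_biUnion (hS.set_pairwise _)]
  exact sum_le_univ_sum_of_nonneg hp

theorem sum_sum_eq_sum_univ_iff (hS : Pairwise (Disjoint on S)) (hp : ∀ j, 0 ≤ p j) :
    ∑ i, ∑ j ∈ S i, p j = ∑ j, p j ↔ ∀ j, (∀ i, j ∉ S i) → p j = 0 := by
  classical
  rw [← sum_biUnion (hS.set_pairwise _), ← sum_sdiff (subset_univ (univ.biUnion S)),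
    eq_comm, add_eq_right, sum_eq_zero_iff_of_nonneg fun j _ ↦ hp j]
  simp

end Pricing

def IsWalrasianEquilibrium {N M : Type*} [Fintype N] [Fintype M]
    (v : N → Finset M → ℝ) (S : N → Finset M) (p : M → ℝ) : Prop :=
  Pairwise (Disjoint on S) ∧ (∀ j, 0 ≤ p j) ∧
    (∀ i (X : Finset M), v i X - ∑ j ∈ X, p j ≤ v i (S i) - ∑ j ∈ S i, p j) ∧
    ∀ j, (∀ i, j ∉ S i) → p j = 0

namespace IsWalrasianEquilibrium

variable {N M : Type*} [Fintype N] [Fintype M] {v : N → Finset M → ℝ} {S S' : N → Finset M}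
  {p : M → ℝ}

theorem of_welfare_le (h : IsWalrasianEquilibrium v S p) (hS' : Pairwise (Disjoint on S'))
    (hle : ∑ i, v i (S i) ≤ ∑ i, v i (S' i)) : IsWalrasianEquilibrium v S' p := by
  obtain ⟨hS, hp, hdemand, hzero⟩ := h
  set u : (N → Finset M) → N → ℝ := fun T i ↦ v i (T i) - ∑ j ∈ T i, p j
  have hu_le (i : N) : u S' i ≤ u S i := hdemand i (S' i)
  have hsum_u (T : N → Finset M) :
      ∑ i, u T i = ∑ i, v i (T i) - ∑ i, ∑ j ∈ T i, p j := sum_sub_distrib ..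
  have hpS := (sum_sum_eq_sum_univ_iff hS hp).2 hzero
  have hpS' := sum_sum_le_sum_univ hS' hp
  have hsum_eq : ∑ i, u S' i = ∑ i, u S i :=
    le_antisymm (sum_le_sum fun i _ ↦ hu_le i) (by rw [hsum_u, hsum_u]; linarith)
  refine ⟨hS', hp, fun i X ↦ ?_, (sum_sum_eq_sum_univ_iff hS' hp).1 ?_⟩
  · have := (sum_eq_sum_iff_of_le fun i _ ↦ hu_le i).1 hsum_eq i (mem_univ i)
    exact (hdemand i X).trans this.ge
  · rw [hsum_u, hsum_u] at hsum_eq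
    linarith

end IsWalrasianEquilibrium

theorem walrasian_decomposition_general {N M : Type*} [Fintype N] [Fintype M]
    (v : N → Finset M → ℝ)
    -- `S*` is an allocation ...
    (Sstar : N → Finset M) (hSstar : ∀ i i', i ≠ i' → Disjoint (Sstar i) (Sstar i'))
    -- ... which is welfare-maximizing
    (hopt : ∀ S' : N → Finset M, (∀ i i', i ≠ i' → Disjoint (S' i) (S' i')) →
      ∑ i, v i (S' i) ≤ ∑ i, v i (Sstar i)) :
    -- the market has a Walrasian equilibrium
    (∃ (S : N → Finset M) (p : M → ℝ),
        (∀ i i', i ≠ i' → Disjoint (S i) (S i')) ∧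
        (∀ j, 0 ≤ p j) ∧
        (∀ i (X : Finset M), v i X - ∑ j ∈ X, p j ≤ v i (S i) - ∑ j ∈ S i, p j) ∧
        (∀ j : M, (∀ i, j ∉ S i) → p j = 0)) ↔
    -- iff some pricing supports `S*`
    (∃ p : M → ℝ,
        (∀ j, 0 ≤ p j) ∧
        (∀ i (X : Finset M),
          v i X - ∑ j ∈ X, p j ≤ v i (Sstar i) - ∑ j ∈ Sstar i, p j) ∧
        (∀ j : M, (∀ i, j ∉ Sstar i) → p j = 0)) := by
  constructor
  · rintro ⟨S, p, hWE⟩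
    exact ⟨p, (IsWalrasianEquilibrium.of_welfare_le hWE hSstar (hopt S hWE.1)).2⟩
  · rintro ⟨p, hsupport⟩
    exact ⟨Sstar, p, hSstar, hsupport⟩

/-- Fix any welfare-maximizing allocation `S*`. Then the market possesses a Walrasian
equilibrium if and only if there exists a pricing `p` such that `(S*, p)` is a
Walrasian equilibrium. -/
theorem walrasian_decomposition {N M : Type*} [Fintype N] [Fintype M] [DecidableEq M]
    (v : N → Finset M → ℝ)
    (hnorm : ∀ i, v i ∅ = 0) (hnonneg : ∀ i X, 0 ≤ v i X)
    -- `S*` is an allocation ...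
    (Sstar : N → Finset M) (hSstar : ∀ i i', i ≠ i' → Disjoint (Sstar i) (Sstar i'))
    -- ... which is welfare-maximizing
    (hopt : ∀ S' : N → Finset M, (∀ i i', i ≠ i' → Disjoint (S' i) (S' i')) →
      ∑ i, v i (S' i) ≤ ∑ i, v i (Sstar i)) :
    -- the market has a Walrasian equilibrium
    (∃ (S : N → Finset M) (p : M → ℝ),
        (∀ i i', i ≠ i' → Disjoint (S i) (S i')) ∧
        (∀ j, 0 ≤ p j) ∧
        (∀ i (X : Finset M), v i X - ∑ j ∈ X, p j ≤ v i (S i) - ∑ j ∈ S i, p j) ∧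
        (∀ j : M, (∀ i, j ∉ S i) → p j = 0)) ↔
    -- iff some pricing supports `S*`
    (∃ p : M → ℝ,
        (∀ j, 0 ≤ p j) ∧
        (∀ i (X : Finset M),
          v i X - ∑ j ∈ X, p j ≤ v i (Sstar i) - ∑ j ∈ Sstar i, p j) ∧
        (∀ j : M, (∀ i, j ∉ Sstar i) → p j = 0)) :=
  walrasian_decomposition_general v Sstar hSstar hopt
end

section
/- (Correctness of the reduction in Theorem 3.) Let X, Y, Z be finite sets with |X| = |Y| = |Z|, and let S be a finite set of triples in X × Y × Z such that every element of X ∪ Y ∪ Z occurs in at most three triples of S and any two distinct triples of S agree in at most one coordinate. Form a market whose agents are the elements of X and whose items are the elements of Y ⊎ Z, where the valuation of agent x for a bundle T ⊆ Y ⊎ Z is v_x(T) = max over triples (x, y, z) ∈ S of (𝟙[y ∈ T] + 𝟙[z ∈ T]) (and v_x(T) = 0 if x occurs in no triple of S). Then there exists an allocation (a family (T_x)_{x∈X} of pairwise disjoint subsets of Y ⊎ Z) with ∑_{x∈X} v_x(T_x) ≥ 2|X| if and only if there exists a subset S' ⊆ S with |S'| = |X| whose triples are pairwise disjoint in every coordinate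 (i.e., a three-dimensional perfect matching). -/
/-!
An allocation reaches welfare `2|X|` exactly when every agent `x` receives both items `y` and
`z` of some triple `(x, y, z) ∈ S`, since no valuation exceeds `2`. Choosing one such triple per
agent gives `|X|` triples with distinct first coordinates, and disjointness of the bundles makes
their `y`s and `z`s distinct. Conversely, `|X|` triples with distinct first coordinates cover
every agent once, and giving each agent the two items of its triple yields welfare `2|X|`.
-/

namespace ThreeDM

open Finset Function

lemma card_mul_le_sum_iff {ι : Type*} [Fintype ι] {f : ι → ℕ} {c : ℕ} (hf : ∀ i, f i ≤ c) :
    c * Fintype.card ι ≤ ∑ i, f i ↔ ∀ i, f i = c := by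
  have hsum : ∑ i, f i ≤ ∑ _i : ι, c := sum_le_sum fun i _ => hf i
  have hconst : ∑ _i : ι, c = c * Fintype.card ι := by simp [mul_comm]
  rw [← hconst, hsum.ge_iff_eq, sum_eq_sum_iff_of_le fun i _ => hf i]
  simp

lemma exists_fst_eq_of_injOn_of_card_eq {α β : Type*} [Fintype α] [DecidableEq α]
    {M : Finset (α × β)} (hinj : Set.InjOn Prod.fst (M : Set (α × β)))
    (hcard : #M = Fintype.card α) (a : α) :
    ∃ p ∈ M, p.1 = a := by
  have himage : M.image Prod.fst = univ :=
    eq_univ_of_card _ (by rw [card_image_of_injOn hinj, hcard])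
  exact mem_image.mp (himage ▸ mem_univ a)

variable {X Y Z : Type*}

def IsTripleMatching (M : Finset (X × Y × Z)) : Prop :=
  (M : Set (X × Y × Z)).Pairwise fun s t => s.1 ≠ t.1 ∧ s.2.1 ≠ t.2.1 ∧ s.2.2 ≠ t.2.2

section Valuation

variable [DecidableEq Y] [DecidableEq Z]

def tripleValue (T : Finset (Y ⊕ Z)) (s : X × Y × Z) : ℕ :=
  (if Sum.inl s.2.1 ∈ T then 1 else 0) + (if Sum.inr s.2.2 ∈ T then 1 else 0)

lemma tripleValue_le_two (T : Finset (Y ⊕ Z)) (s : X × Y × Z) : tripleValue T s ≤ 2 := by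
  unfold tripleValue
  split_ifs <;> omega

lemma tripleValue_eq_two_iff {T : Finset (Y ⊕ Z)} {s : X × Y × Z} :
    tripleValue T s = 2 ↔ Sum.inl s.2.1 ∈ T ∧ Sum.inr s.2.2 ∈ T := by
  unfold tripleValue
  split_ifs <;> simp_all

variable [DecidableEq X]

def valuation (S : Finset (X × Y × Z)) (x : X) (T : Finset (Y ⊕ Z)) : ℕ :=
  (S.filter fun s => s.1 = x).sup (tripleValue T)

lemma valuation_le_two (S : Finset (X × Y × Z)) (x : X) (T : Finset (Y ⊕ Z)) :
    valuation S x T ≤ 2 :=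
  Finset.sup_le fun s _ => tripleValue_le_two T s

lemma valuation_eq_two_iff {S : Finset (X × Y × Z)} {x : X} {T : Finset (Y ⊕ Z)} :
    valuation S x T = 2 ↔ ∃ s ∈ S, s.1 = x ∧ Sum.inl s.2.1 ∈ T ∧ Sum.inr s.2.2 ∈ T := by
  constructor
  · intro h
    have hne : (S.filter fun s => s.1 = x).Nonempty := by
      rw [nonempty_iff_ne_empty]
      rintro hempty
      simp [valuation, hempty] at h
    obtain ⟨s, hs, hsup⟩ := exists_mem_eq_sup _ hne (tripleValue T)
    obtain ⟨hsS, hsx⟩ := mem_filter.mp hs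
    exact ⟨s, hsS, hsx, tripleValue_eq_two_iff.mp (hsup ▸ h)⟩
  · rintro ⟨s, hsS, hsx, hy, hz⟩
    refine (valuation_le_two S x T).antisymm ?_
    rw [← tripleValue_eq_two_iff.mpr ⟨hy, hz⟩]
    exact le_sup (mem_filter.mpr ⟨hsS, hsx⟩)

variable [Fintype X] {S : Finset (X × Y × Z)}

lemma exists_matching_of_allocation {T : X → Finset (Y ⊕ Z)} (hT : Pairwise (Disjoint on T))
    (hv : ∀ x, valuation S x (T x) = 2) :
    ∃ M ⊆ S, #M = Fintype.card X ∧ IsTripleMatching M := by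
  choose g hgS hgx hgy hgz using fun x => valuation_eq_two_iff.mp (hv x)
  have hg : Function.Injective g := fun a b h => by rw [← hgx a, h, hgx b]
  refine ⟨univ.image g, image_subset_iff.mpr fun x _ => hgS x,
    by rw [card_image_of_injective _ hg, card_univ], ?_⟩
  rintro _ hs _ ht hst
  obtain ⟨a, -, rfl⟩ := mem_image.mp hs
  obtain ⟨b, -, rfl⟩ := mem_image.mp ht
  have hab : a ≠ b := fun h => hst (h ▸ rfl)
  refine ⟨by rwa [hgx, hgx], fun h => ?_, fun h => ?_⟩
  · exact disjoint_left.mp (hT hab) (hgy a) (h ▸ hgy b)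
  · exact disjoint_left.mp (hT hab) (hgz a) (h ▸ hgz b)

lemma exists_allocation_of_matching {M : Finset (X × Y × Z)} (hMS : M ⊆ S)
    (hcard : #M = Fintype.card X) (hM : IsTripleMatching M) :
    ∃ T : X → Finset (Y ⊕ Z), Pairwise (Disjoint on T) ∧ ∀ x, valuation S x (T x) = 2 := by
  have hinj : Set.InjOn Prod.fst (M : Set (X × Y × Z)) := fun s hs t ht h =>
    by_contra fun hst => (hM hs ht hst).1 h
  choose g hgM hgx using exists_fst_eq_of_injOn_of_card_eq hinj hcard
  refine ⟨fun x => {Sum.inl (g x).2.1, Sum.inr (g x).2.2}, fun a b hab => ?_,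
    fun x => valuation_eq_two_iff.mpr ⟨g x, hMS (hgM x), hgx x, by simp, by simp⟩⟩
  obtain ⟨-, hy, hz⟩ := hM (hgM a) (hgM b) fun h => hab (by rw [← hgx a, h, hgx b])
  simp [onFun, hy.symm, hz.symm]

end Valuation

end ThreeDM

open Finset Function ThreeDM in
theorem threeDM_reduction_correct_general {X Y Z : Type*}
    [Fintype X]
    [DecidableEq X] [DecidableEq Y] [DecidableEq Z]
    (S : Finset (X × Y × Z)) :
    -- there is an allocation of social welfare at least `2|X|` ...
    (∃ T : X → Finset (Y ⊕ Z),
      (∀ x x', x ≠ x' → Disjoint (T x) (T x')) ∧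
      2 * Fintype.card X ≤
        ∑ x : X, (S.filter (fun s => s.1 = x)).sup
          (fun s => (if Sum.inl s.2.1 ∈ T x then 1 else 0) +
                    (if Sum.inr s.2.2 ∈ T x then 1 else 0))) ↔
    -- ... iff there is a three-dimensional perfect matching inside `S`
    (∃ S' ⊆ S, S'.card = Fintype.card X ∧
      ∀ s ∈ S', ∀ t ∈ S', s ≠ t →
        s.1 ≠ t.1 ∧ s.2.1 ≠ t.2.1 ∧ s.2.2 ≠ t.2.2) := by
  change (∃ T : X → Finset (Y ⊕ Z), Pairwise (Disjoint on T) ∧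
      2 * Fintype.card X ≤ ∑ x, valuation S x (T x)) ↔
    ∃ M ⊆ S, #M = Fintype.card X ∧ IsTripleMatching M
  simp only [card_mul_le_sum_iff fun x => valuation_le_two S x _]
  exact ⟨fun ⟨_, hT, hv⟩ => exists_matching_of_allocation hT hv,
    fun ⟨_, hMS, hcard, hM⟩ => exists_allocation_of_matching hMS hcard hM⟩

/-- **Correctness of the reduction from 3-bounded 3-dimensional matching.**
Given finite sets `X, Y, Z` of equal cardinality and a set `S` of triples in which every
element occurs in at most three triples and any two distinct triples agree in at most one
coordinate, the market with agents `X`, items `Y ⊕ Z`, and valuations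
`v_x(T) = max_{(x,y,z) ∈ S} (𝟙[inl y ∈ T] + 𝟙[inr z ∈ T])` admits an allocation of social
welfare at least `2|X|` iff `S` contains `|X|` triples that are pairwise disjoint in every
coordinate. -/
theorem threeDM_reduction_correct {X Y Z : Type*}
    [Fintype X] [Fintype Y] [Fintype Z]
    [DecidableEq X] [DecidableEq Y] [DecidableEq Z]
    (hXY : Fintype.card X = Fintype.card Y) (hXZ : Fintype.card X = Fintype.card Z)
    (S : Finset (X × Y × Z))
    -- every element occurs in at most three triples of `S`
    (hx : ∀ x : X, (S.filter (fun s => s.1 = x)).card ≤ 3)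
    (hy : ∀ y : Y, (S.filter (fun s => s.2.1 = y)).card ≤ 3)
    (hz : ∀ z : Z, (S.filter (fun s => s.2.2 = z)).card ≤ 3)
    -- any two distinct triples of `S` agree in at most one coordinate
    (hshare : ∀ s ∈ S, ∀ t ∈ S, s ≠ t →
      ¬(s.1 = t.1 ∧ s.2.1 = t.2.1) ∧ ¬(s.1 = t.1 ∧ s.2.2 = t.2.2) ∧
      ¬(s.2.1 = t.2.1 ∧ s.2.2 = t.2.2)) :
    -- there is an allocation of social welfare at least `2|X|` ...
    (∃ T : X → Finset (Y ⊕ Z),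
      (∀ x x', x ≠ x' → Disjoint (T x) (T x')) ∧
      2 * Fintype.card X ≤
        ∑ x : X, (S.filter (fun s => s.1 = x)).sup
          (fun s => (if Sum.inl s.2.1 ∈ T x then 1 else 0) +
                    (if Sum.inr s.2.2 ∈ T x then 1 else 0))) ↔
    -- ... iff there is a three-dimensional perfect matching inside `S`
    (∃ S' ⊆ S, S'.card = Fintype.card X ∧
      ∀ s ∈ S', ∀ t ∈ S', s ≠ t →
        s.1 ≠ t.1 ∧ s.2.1 ≠ t.2.1 ∧ s.2.2 ≠ t.2.2) :=
  threeDM_reduction_correct_general S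
end

section
/- (Correctness of the reduction in Theorem 5.) Let n ≥ 1 and B ≥ 1 be integers, and let a_1, …, a_{3n} be positive integers with ∑_{i=1}^{3n} a_i = n·B. Consider a market with n agents and 3n items in which every agent has the identical 3-demand budget-additive valuation v(T) = max over subsets T' ⊆ T with |T'| ≤ 3 of min(B, ∑_{i∈T'} a_i). Then there exists an allocation (pairwise disjoint bundles (S_1, …, S_n) of items) with ∑_{i=1}^{n} v(S_i) ≥ n·B if and only if the multiset {a_1, …, a_{3n}} can be partitioned into n triples, each summing to exactly B; moreover, in the forward direction any such welfare-n·B allocation gives each agent value exactly B. -/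
/-- The identical 3-demand budget-additive valuation of the reduction: the value of a
bundle `T` is the maximum over sub-bundles `T' ⊆ T` with `|T'| ≤ 3` of
`min (B, ∑_{i ∈ T'} a i)`. -/
def budgetVal3 (B : ℕ) {m : ℕ} (a : Fin m → ℕ) (T : Finset (Fin m)) : ℕ :=
  (T.powerset.filter (fun T' => T'.card ≤ 3)).sup (fun T' => min B (∑ i ∈ T', a i))

/-! Each agent's value is capped at `B`, so welfare `n·B` forces value exactly `B` for everyone,
witnessed by a sub-bundle of at most three items of total weight at least `B`. These sub-bundles
are disjoint and the total weight is `n·B`, so each weighs exactly `B`; as all weights are positive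
they cover every item, and `3n` items in `n` bundles of size at most three forces size three. -/

open Finset Function

section EqOfSum

variable {ι M : Type*} [Fintype ι] [AddCommMonoid M] [PartialOrder M] [IsOrderedCancelAddMonoid M]
  {f : ι → M} {b : M}

theorem eq_of_forall_le_of_card_nsmul_le_sum (hle : ∀ i, f i ≤ b)
    (h : Fintype.card ι • b ≤ ∑ i, f i) (i : ι) : f i = b := by
  have hsum : ∑ i, f i = ∑ _i : ι, b :=
    le_antisymm (sum_le_sum fun i _ => hle i) (by simpa using h)
  exact (sum_eq_sum_iff_of_le fun i _ => hle i).1 hsum i (mem_univ i)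

theorem eq_of_forall_ge_of_sum_le_card_nsmul (hge : ∀ i, b ≤ f i)
    (h : ∑ i, f i ≤ Fintype.card ι • b) (i : ι) : f i = b := by
  have hsum : ∑ _i : ι, b = ∑ i, f i :=
    le_antisymm (sum_le_sum fun i _ => hge i) (by simpa using h)
  exact ((sum_eq_sum_iff_of_le fun i _ => hge i).1 hsum i (mem_univ i)).symm

end EqOfSum

theorem Finset.eq_univ_of_sum_eq_sum_univ {α : Type*} [Fintype α] {a : α → ℕ}
    (ha : ∀ x, 0 < a x) {s : Finset α} (h : ∑ x ∈ s, a x = ∑ x, a x) : s = univ := by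
  by_contra hs
  obtain ⟨x, -, hx⟩ := exists_of_ssubset (ssubset_univ_iff.2 hs)
  have := sum_lt_sum_of_subset (subset_univ s) (mem_univ x) hx (ha x) fun _ _ _ => Nat.zero_le _
  omega

section BudgetVal3

variable {B m : ℕ} {a : Fin m → ℕ} {T : Finset (Fin m)}

theorem budgetVal3_le : budgetVal3 B a T ≤ B :=
  Finset.sup_le fun _ _ => min_le_left _ _

theorem min_le_budgetVal3 {T' : Finset (Fin m)} (hT' : T' ⊆ T) (hcard : #T' ≤ 3) :
    min B (∑ i ∈ T', a i) ≤ budgetVal3 B a T :=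
  le_sup (f := fun T' => min B (∑ i ∈ T', a i)) (mem_filter.2 ⟨mem_powerset.2 hT', hcard⟩)

theorem budgetVal3_eq_of_card_eq_three (hcard : #T = 3) (hsum : ∑ i ∈ T, a i = B) :
    budgetVal3 B a T = B :=
  le_antisymm budgetVal3_le <| by
    simpa only [hsum, min_self] using min_le_budgetVal3 (B := B) (a := a) subset_rfl hcard.le

theorem exists_subset_le_sum_of_budgetVal3_eq (h : budgetVal3 B a T = B) :
    ∃ T' ⊆ T, #T' ≤ 3 ∧ B ≤ ∑ i ∈ T', a i := by
  obtain ⟨T', hT', hval⟩ := exists_mem_eq_sup (T.powerset.filter fun T' => #T' ≤ 3)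
    ⟨∅, by simp⟩ fun T' => min B (∑ i ∈ T', a i)
  rw [mem_filter, mem_powerset] at hT'
  refine ⟨T', hT'.1, hT'.2, ?_⟩
  have : min B (∑ i ∈ T', a i) = B := hval ▸ h
  omega

end BudgetVal3

theorem budgetVal3_eq_of_welfare_ge {n B m : ℕ} {a : Fin m → ℕ} {S : Fin n → Finset (Fin m)}
    (h : n * B ≤ ∑ i, budgetVal3 B a (S i)) (i : Fin n) : budgetVal3 B a (S i) = B :=
  eq_of_forall_le_of_card_nsmul_le_sum (fun _ => budgetVal3_le) (by simpa using h) i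

theorem sum_eq_and_biUnion_eq_univ_of_le_sum {α : Type*} [Fintype α] [DecidableEq α] {n B : ℕ}
    {a : α → ℕ} (ha : ∀ x, 0 < a x) (hsum : ∑ x, a x = n * B) {T : Fin n → Finset α}
    (hdisj : Pairwise (Disjoint on T)) (hge : ∀ i, B ≤ ∑ x ∈ T i, a x) :
    (∀ i, ∑ x ∈ T i, a x = B) ∧ univ.biUnion T = univ := by
  have hunion : ∑ x ∈ univ.biUnion T, a x = ∑ i, ∑ x ∈ T i, a x :=
    sum_biUnion (hdisj.set_pairwise _)
  have hle : ∑ i, ∑ x ∈ T i, a x ≤ n * B :=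
    hunion ▸ hsum ▸ sum_le_sum_of_subset (subset_univ _)
  have heq : ∀ i, ∑ x ∈ T i, a x = B :=
    eq_of_forall_ge_of_sum_le_card_nsmul hge (by simpa using hle)
  refine ⟨heq, eq_univ_of_sum_eq_sum_univ ha ?_⟩
  simp [hunion, heq, hsum]

theorem card_eq_three_of_biUnion_eq_univ {n : ℕ} {T : Fin n → Finset (Fin (3 * n))}
    (hdisj : Pairwise (Disjoint on T)) (hcard : ∀ i, #(T i) ≤ 3)
    (hcover : univ.biUnion T = univ) (i : Fin n) : #(T i) = 3 := by
  have h := card_biUnion (hdisj.set_pairwise (univ : Finset (Fin n)))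
  rw [hcover, card_univ, Fintype.card_fin] at h
  exact eq_of_forall_le_of_card_nsmul_le_sum hcard (by simp [← h, mul_comm]) i

theorem exists_three_partition_of_welfare_ge {n B : ℕ} {a : Fin (3 * n) → ℕ}
    (ha : ∀ i, 0 < a i) (hsum : ∑ i, a i = n * B) {S : Fin n → Finset (Fin (3 * n))}
    (hdisj : ∀ i j, i ≠ j → Disjoint (S i) (S j)) (hwelfare : n * B ≤ ∑ i, budgetVal3 B a (S i)) :
    ∃ P : Fin n → Finset (Fin (3 * n)),
      (∀ i j, i ≠ j → Disjoint (P i) (P j)) ∧ ∀ i, #(P i) = 3 ∧ ∑ x ∈ P i, a x = B := by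
  choose T hTS hTcard hTsum using fun i =>
    exists_subset_le_sum_of_budgetVal3_eq (budgetVal3_eq_of_welfare_ge hwelfare i)
  have hTdisj : ∀ i j, i ≠ j → Disjoint (T i) (T j) := fun i j hij =>
    (hdisj i j hij).mono (hTS i) (hTS j)
  obtain ⟨hweight, hcover⟩ := sum_eq_and_biUnion_eq_univ_of_le_sum ha hsum hTdisj hTsum
  exact ⟨T, hTdisj, fun i => ⟨card_eq_three_of_biUnion_eq_univ hTdisj hTcard hcover i, hweight i⟩⟩

theorem three_partition_reduction_correct_general (n B : ℕ)
    (a : Fin (3 * n) → ℕ) (ha : ∀ i, 0 < a i) (hsum : ∑ i, a i = n * B) :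
    ((∃ S : Fin n → Finset (Fin (3 * n)),
        (∀ i j, i ≠ j → Disjoint (S i) (S j)) ∧
        n * B ≤ ∑ i, budgetVal3 B a (S i)) ↔
      (∃ P : Fin n → Finset (Fin (3 * n)),
        (∀ i j, i ≠ j → Disjoint (P i) (P j)) ∧
        ∀ i, (P i).card = 3 ∧ ∑ x ∈ P i, a x = B)) ∧
    (∀ S : Fin n → Finset (Fin (3 * n)),
      (∀ i j, i ≠ j → Disjoint (S i) (S j)) →
      n * B ≤ ∑ i, budgetVal3 B a (S i) →
      ∀ i, budgetVal3 B a (S i) = B) := by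
  refine ⟨⟨fun ⟨S, hdisj, hwelfare⟩ => exists_three_partition_of_welfare_ge ha hsum hdisj hwelfare,
    fun ⟨P, hdisj, hP⟩ => ⟨P, hdisj, ?_⟩⟩, fun S _ hwelfare => budgetVal3_eq_of_welfare_ge hwelfare⟩
  simp [budgetVal3_eq_of_card_eq_three (hP _).1 (hP _).2]

/-- **Correctness of the reduction from 3-partition.** For positive integers
`a_1, …, a_{3n}` summing to `n·B`, the market with `n` agents, `3n` items and identical
3-demand budget-additive valuations admits an allocation of social welfare at least `n·B`
iff the numbers can be partitioned into `n` triples each summing to `B`; moreover any such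
welfare-`n·B` allocation gives every agent value exactly `B`. -/
theorem three_partition_reduction_correct (n B : ℕ) (hn : 1 ≤ n) (hB : 1 ≤ B)
    (a : Fin (3 * n) → ℕ) (ha : ∀ i, 0 < a i) (hsum : ∑ i, a i = n * B) :
    ((∃ S : Fin n → Finset (Fin (3 * n)),
        (∀ i j, i ≠ j → Disjoint (S i) (S j)) ∧
        n * B ≤ ∑ i, budgetVal3 B a (S i)) ↔
      (∃ P : Fin n → Finset (Fin (3 * n)),
        (∀ i j, i ≠ j → Disjoint (P i) (P j)) ∧
        ∀ i, (P i).card = 3 ∧ ∑ x ∈ P i, a x = B)) ∧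
    (∀ S : Fin n → Finset (Fin (3 * n)),
      (∀ i j, i ≠ j → Disjoint (S i) (S j)) →
      n * B ≤ ∑ i, budgetVal3 B a (S i) →
      ∀ i, budgetVal3 B a (S i) = B) :=
  three_partition_reduction_correct_general n B a ha hsum
end

section
/- (Existence of Walrasian equilibria in unit-demand markets.) Let N be a finite set of agents, M a finite set of items, and for each i ∈ N and j ∈ M let v_{ij} ≥ 0, with each agent i having the unit-demand valuation v_i(T) = max_{j∈T} v_{ij} (and v_i(∅) = 0). Then a Walrasian equilibrium exists: there are an allocation S and a pricing p such that (S, p) is a Walrasian equilibrium. -/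
/-!
Take nonnegative utilities `u` and prices `p` with `vᵢⱼ ≤ uᵢ + pⱼ` of least total `∑ u + ∑ p`
(a minimum weighted cover, the optimum of the linear program dual to maximum-weight matching).
Minimality yields Hall's condition in the tight graph `uᵢ + pⱼ = vᵢⱼ` for the agents with
`uᵢ > 0`, and symmetrically for the items with `pⱼ > 0`; the Mendelsohn–Dulmage theorem merges
the two tight matchings into one that matches all of them. Giving every agent its matched item is
then a Walrasian equilibrium: agent `i` gets utility `uᵢ`, and no bundle gives more, since
`vᵢⱼ - pⱼ ≤ uᵢ` for every item `j`.
-/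

open Finset Filter Topology

section

variable {α β : Type*}

structure IsMatching (E : α → β → Prop) (σ : α → Option β) : Prop where
  rel : ∀ a b, σ a = some b → E a b
  inj : ∀ a a' b, σ a = some b → σ a' = some b → a = a'

inductive AlternatingReach (σ τ : α → Option β) (r : β) : α → Prop
  | base {a : α} : τ a = some r → AlternatingReach σ τ r a
  | step {a a' : α} {b : β} : AlternatingReach σ τ r a → σ a = some b → τ a' = some b →
      AlternatingReach σ τ r a'

namespace IsMatching

variable {E : α → β → Prop} {σ τ : α → Option β}

theorem mono {E' : α → β → Prop} (h : IsMatching E σ) (hE : ∀ a b, E a b → E' a b) :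
    IsMatching E' σ :=
  ⟨fun a b hab => hE a b (h.rel a b hab), h.inj⟩

theorem exists_transpose {τ : β → Option α} (h : IsMatching (flip E) τ) :
    ∃ σ : α → Option β, IsMatching E σ ∧ ∀ a b, τ b = some a → σ a = some b := by
  classical
  have hchoose : ∀ a (ha : ∃ b, τ b = some a), τ ha.choose = some a := fun a ha => ha.choose_spec
  refine ⟨fun a => if ha : ∃ b, τ b = some a then some ha.choose else none, ⟨?_, ?_⟩, ?_⟩
  · intro a b hab
    split_ifs at hab with ha
    cases hab
    exact h.rel _ _ (hchoose a ha)
  · intro a a' b hab hab'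
    split_ifs at hab hab' with ha ha'
    have h₁ := hchoose a ha
    have h₂ := hchoose a' ha'
    rw [Option.some_inj] at hab hab'
    rw [hab] at h₁
    rw [hab'] at h₂
    exact Option.some_injective _ (h₁.symm.trans h₂)
  · intro a b hba
    have ha : ∃ b, τ b = some a := ⟨b, hba⟩
    simp only [dif_pos ha, h.inj _ _ _ (hchoose a ha) hba]

theorem exists_of_injective {p : α → Prop} {f : {a // p a} → β} (hf : Function.Injective f)
    (hE : ∀ x, E x.1 (f x)) : ∃ σ : α → Option β, IsMatching E σ ∧ ∀ a, p a → σ a ≠ none := by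
  classical
  refine ⟨fun a => if ha : p a then some (f ⟨a, ha⟩) else none, ⟨?_, ?_⟩, ?_⟩
  · intro a b hab
    split_ifs at hab with ha
    cases hab
    exact hE ⟨a, ha⟩
  · intro a a' b hab hab'
    split_ifs at hab hab' with ha ha'
    exact congrArg Subtype.val (hf (Option.some_injective _ (hab.trans hab'.symm)))
  · intro a ha
    simp [ha]

/-- Trade the `σ`-edges for the `τ`-edges on the alternating paths `AlternatingReach σ τ r`. -/
theorem exists_augment (hσ : IsMatching E σ) (hτ : IsMatching E τ) {r : β}
    (hr : ∃ a, τ a = some r) (hσr : ∀ a, σ a ≠ some r) :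
    ∃ σ' : α → Option β, IsMatching E σ' ∧ (∀ a, σ a ≠ none → σ' a ≠ none) ∧
      (∀ b, (∃ a, σ a = some b) → (∃ a, τ a = some b) → ∃ a, σ' a = some b) ∧
      ∃ a, σ' a = some r := by
  classical
  let O := AlternatingReach σ τ r
  have hO_tau : ∀ a, O a → τ a ≠ none := by
    rintro a (⟨h⟩ | ⟨-, -, h⟩) <;> simp [h]
  have hO_closed : ∀ a a' b, O a → τ a = some b → σ a' = some b → O a' := by
    rintro a a' b (⟨h⟩ | ⟨ha₀, hσ₀, h⟩) hτb hσb
    · exact absurd (Option.some_injective _ (h.symm.trans hτb) ▸ hσb) (hσr a')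
    · cases Option.some_injective _ (h.symm.trans hτb)
      exact hσ.inj _ _ _ hσ₀ hσb ▸ ha₀
  let σ' : α → Option β := fun a => if O a then τ a else σ a
  have hσ'_of_mem : ∀ {a}, O a → σ' a = τ a := fun h => if_pos h
  have hσ'_of_not_mem : ∀ {a}, ¬O a → σ' a = σ a := fun h => if_neg h
  refine ⟨σ', ⟨fun a b hab => ?_, fun a a' b hab hab' => ?_⟩, fun a ha => ?_, ?_, ?_⟩
  · by_cases hOa : O a
    · exact hτ.rel a b (hσ'_of_mem hOa ▸ hab)
    · exact hσ.rel a b (hσ'_of_not_mem hOa ▸ hab)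
  · by_cases hOa : O a <;> by_cases hOa' : O a'
    · exact hτ.inj a a' b (hσ'_of_mem hOa ▸ hab) (hσ'_of_mem hOa' ▸ hab')
    · exact absurd (hO_closed a a' b hOa (hσ'_of_mem hOa ▸ hab) (hσ'_of_not_mem hOa' ▸ hab')) hOa'
    · exact absurd (hO_closed a' a b hOa' (hσ'_of_mem hOa' ▸ hab') (hσ'_of_not_mem hOa ▸ hab)) hOa
    · exact hσ.inj a a' b (hσ'_of_not_mem hOa ▸ hab) (hσ'_of_not_mem hOa' ▸ hab')
  · by_cases hOa : O a
    · exact hσ'_of_mem hOa ▸ hO_tau a hOa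
    · exact hσ'_of_not_mem hOa ▸ ha
  · rintro b ⟨a, hab⟩ ⟨a', hab'⟩
    by_cases hOa : O a
    · exact ⟨a', (hσ'_of_mem (.step hOa hab hab')).trans hab'⟩
    · exact ⟨a, (hσ'_of_not_mem hOa).trans hab⟩
  · obtain ⟨a, ha⟩ := hr
    exact ⟨a, (hσ'_of_mem (.base ha)).trans ha⟩

theorem mendelsohn_dulmage [DecidableEq β] (hσ : IsMatching E σ) (hτ : IsMatching E τ)
    (P : Finset β) :
    ∃ ρ : α → Option β, IsMatching E ρ ∧ (∀ a, σ a ≠ none → ρ a ≠ none) ∧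
      ∀ b ∈ P, (∃ a, τ a = some b) → ∃ a, ρ a = some b := by
  induction P using Finset.induction_on with
  | empty => exact ⟨σ, hσ, fun _ => id, by simp⟩
  | insert r P _ ih =>
    obtain ⟨ρ, hρ, hρσ, hρP⟩ := ih
    by_cases hr : (∃ a, τ a = some r) → ∃ a, ρ a = some r
    · exact ⟨ρ, hρ, hρσ, forall_mem_insert _ _ _ |>.2 ⟨hr, hρP⟩⟩
    obtain ⟨hτr, hρr⟩ := Classical.not_imp.1 hr
    obtain ⟨ρ', hρ', hρ'ρ, hρ'τ, hρ'r⟩ := hρ.exists_augment hτ hτr (not_exists.1 hρr)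
    refine ⟨ρ', hρ', fun a ha => hρ'ρ a (hρσ a ha), forall_mem_insert _ _ _ |>.2 ⟨?_, ?_⟩⟩
    · exact fun _ => hρ'r
    · exact fun b hb hτb => hρ'τ b (hρP b hb hτb) hτb

end IsMatching

/-- Egerváry's weighted covers, the feasible points of the linear program dual to
maximum-weight matching. -/
structure IsWeightedCover (w : α → β → ℝ) (q : α → ℝ) (g : β → ℝ) : Prop where
  nonneg_left : ∀ a, 0 ≤ q a
  nonneg_right : ∀ b, 0 ≤ g b
  le_add : ∀ a b, w a b ≤ q a + g b

structure IsMinWeightedCover [Fintype α] [Fintype β] (w : α → β → ℝ) (q : α → ℝ) (g : β → ℝ) :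
    Prop extends IsWeightedCover w q g where
  sum_le : ∀ q' g', IsWeightedCover w q' g' → ∑ a, q a + ∑ b, g b ≤ ∑ a, q' a + ∑ b, g' b

theorem IsWeightedCover.swap {w : α → β → ℝ} {q : α → ℝ} {g : β → ℝ}
    (h : IsWeightedCover w q g) : IsWeightedCover (flip w) g q :=
  ⟨h.nonneg_right, h.nonneg_left, fun b a => (h.le_add a b).trans_eq (add_comm _ _)⟩

section Fintype

variable [Fintype α] [Fintype β] {w : α → β → ℝ} {q : α → ℝ} {g : β → ℝ}

theorem IsMinWeightedCover.swap (h : IsMinWeightedCover w q g) :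
    IsMinWeightedCover (flip w) g q := by
  refine ⟨h.toIsWeightedCover.swap, fun g' q' h' => ?_⟩
  have := h.sum_le q' g' h'.swap
  linarith

theorem exists_isMinWeightedCover (w : α → β → ℝ) : ∃ q g, IsMinWeightedCover w q g := by
  let F := {x : (α → ℝ) × (β → ℝ) | IsWeightedCover w x.1 x.2}
  let cost : (α → ℝ) × (β → ℝ) → ℝ := fun x => ∑ a, x.1 a + ∑ b, x.2 b
  have hcost : Continuous cost := by fun_prop
  let x₀ : (α → ℝ) × (β → ℝ) := (fun a => ∑ b, |w a b|, 0)
  have hx₀ : x₀ ∈ F := by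
    refine ⟨fun a => sum_nonneg fun b _ => abs_nonneg _, fun _ => le_rfl, fun a b => ?_⟩
    simpa [x₀] using
      (le_abs_self _).trans (single_le_sum (fun b _ => abs_nonneg (w a b)) (mem_univ b))
  have hF : IsClosed F := by
    have : F = {x | ∀ a, 0 ≤ x.1 a} ∩ {x | ∀ b, 0 ≤ x.2 b} ∩ {x | ∀ a b, w a b ≤ x.1 a + x.2 b} :=
      Set.ext fun x => ⟨fun ⟨h₁, h₂, h₃⟩ => ⟨⟨h₁, h₂⟩, h₃⟩, fun ⟨⟨h₁, h₂⟩, h₃⟩ => ⟨h₁, h₂, h₃⟩⟩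
    rw [this]
    simp only [Set.ofPred_forall]
    exact ((isClosed_iInter fun a => isClosed_le continuous_const (by fun_prop)).inter
      (isClosed_iInter fun b => isClosed_le continuous_const (by fun_prop))).inter
      (isClosed_iInter fun a => isClosed_iInter fun b => isClosed_le continuous_const (by fun_prop))
  let K := F ∩ {x | cost x ≤ cost x₀}
  have hK : IsCompact K := by
    refine isCompact_Icc.of_isClosed_subset (hF.inter (isClosed_le hcost continuous_const))
      (show K ⊆ Set.Icc 0 (fun _ => cost x₀, fun _ => cost x₀) from ?_)
    rintro x ⟨hxF, hx⟩
    change ∑ a, x.1 a + ∑ b, x.2 b ≤ cost x₀ at hx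
    have h₁ := sum_nonneg fun a (_ : a ∈ univ) => hxF.nonneg_left a
    have h₂ := sum_nonneg fun b (_ : b ∈ univ) => hxF.nonneg_right b
    refine ⟨⟨hxF.nonneg_left, hxF.nonneg_right⟩, fun a => ?_, fun b => ?_⟩
    · linarith [single_le_sum (fun a _ => hxF.nonneg_left a) (mem_univ a)]
    · linarith [single_le_sum (fun b _ => hxF.nonneg_right b) (mem_univ b)]
  obtain ⟨x, ⟨hxF, hx⟩, hmin⟩ :=
    hK.exists_isMinOn ⟨x₀, hx₀, show cost x₀ ≤ cost x₀ from le_rfl⟩ hcost.continuousOn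
  refine ⟨x.1, x.2, ⟨hxF, fun q' g' h' => ?_⟩⟩
  by_cases h : cost (q', g') ≤ cost x₀
  · exact hmin ⟨h', h⟩
  · exact (hx : cost x ≤ cost x₀).trans (not_le.1 h).le

/-- Otherwise lowering `q` on `s` and raising `g` on `t` by a small `ε` would give a cheaper
cover. -/
theorem IsMinWeightedCover.card_le_of_slack (h : IsMinWeightedCover w q g) {s : Finset α}
    {t : Finset β} (hs : ∀ a ∈ s, 0 < q a) (hst : ∀ a ∈ s, ∀ b ∉ t, w a b < q a + g b) :
    #s ≤ #t := by
  classical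
  have hsmall : ∀ c > 0, ∀ᶠ ε in 𝓝[>] (0 : ℝ), ε ≤ c := fun c hc =>
    (eventually_nhdsWithin_of_eventually_nhds (eventually_lt_nhds hc)).mono fun _ => le_of_lt
  obtain ⟨ε, hε, hεq, hεw⟩ : ∃ ε > 0, (∀ a ∈ s, ε ≤ q a) ∧
      ∀ a ∈ s, ∀ b ∉ t, ε ≤ q a + g b - w a b :=
    (eventually_mem_nhdsWithin.and <|
      ((eventually_all_finset s).2 fun a ha => hsmall _ (hs a ha)).and <|
      (eventually_all_finset s).2 fun a ha => eventually_all.2 fun b =>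
        eventually_imp_distrib_left.2 fun hb => hsmall _ (sub_pos.2 (hst a ha b hb))).exists
  let q' a := q a - if a ∈ s then ε else 0
  let g' b := g b + if b ∈ t then ε else 0
  have hcover : IsWeightedCover w q' g' := by
    refine ⟨fun a => ?_, fun b => ?_, fun a b => ?_⟩
    · by_cases ha : a ∈ s
      · simpa [q', ha] using hεq a ha
      · simpa [q', ha] using h.nonneg_left a
    · have := h.nonneg_right b
      simp only [g']; split_ifs <;> linarith
    · have := h.le_add a b
      by_cases ha : a ∈ s <;> by_cases hb : b ∈ t <;> simp only [q', g', ha, hb, if_true, if_false]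
      · linarith
      · linarith [hεw a ha b hb]
      · linarith
      · linarith
  have hcost := h.sum_le q' g' hcover
  simp only [q', g', sum_sub_distrib, sum_add_distrib, Fintype.sum_ite_mem, sum_const,
    nsmul_eq_mul] at hcost
  have : (#s : ℝ) * ε ≤ #t * ε := by linarith
  exact_mod_cast le_of_mul_le_mul_right this hε

theorem IsMinWeightedCover.exists_isMatching_left (h : IsMinWeightedCover w q g) :
    ∃ σ : α → Option β, IsMatching (fun a b => q a + g b = w a b) σ ∧
      ∀ a, 0 < q a → σ a ≠ none := by
  classical
  let t : {a // 0 < q a} → Finset β := fun a => {b | q a + g b = w a b}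
  obtain ⟨f, hf, hft⟩ := (all_card_le_biUnion_card_iff_exists_injective t).1 fun s => by
    rw [← card_map (Function.Embedding.subtype _)]
    refine h.card_le_of_slack (by simpa using fun a ha _ => ha) fun a ha b hb => ?_
    obtain ⟨x, hx, rfl⟩ := mem_map.1 ha
    refine (h.le_add _ b).lt_of_ne fun hw => hb (mem_biUnion.2 ⟨x, hx, ?_⟩)
    simpa [t] using hw.symm
  exact IsMatching.exists_of_injective hf fun x => (mem_filter.1 (hft x)).2

theorem IsMinWeightedCover.exists_isMatching_right (h : IsMinWeightedCover w q g) :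
    ∃ τ : α → Option β, IsMatching (fun a b => q a + g b = w a b) τ ∧
      ∀ b, 0 < g b → ∃ a, τ a = some b := by
  obtain ⟨τ', hτ', hτ'g⟩ := h.swap.exists_isMatching_left
  obtain ⟨τ, hτ, hττ'⟩ := (hτ'.mono fun b a hab => (add_comm _ _).trans hab).exists_transpose
  refine ⟨τ, hτ, fun b hb => ?_⟩
  obtain ⟨a, ha⟩ := Option.ne_none_iff_exists'.1 (hτ'g b hb)
  exact ⟨a, hττ' a b ha⟩

theorem IsMinWeightedCover.exists_isMatching (h : IsMinWeightedCover w q g) :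
    ∃ ρ : α → Option β, IsMatching (fun a b => q a + g b = w a b) ρ ∧
      (∀ a, ρ a = none → q a = 0) ∧ ∀ b, (∀ a, ρ a ≠ some b) → g b = 0 := by
  classical
  obtain ⟨σ, hσ, hσq⟩ := h.exists_isMatching_left
  obtain ⟨τ, hτ, hτg⟩ := h.exists_isMatching_right
  obtain ⟨ρ, hρ, hρσ, hρτ⟩ := hσ.mendelsohn_dulmage hτ univ
  refine ⟨ρ, hρ, fun a ha => ?_, fun b hb => ?_⟩
  · by_contra hqa
    exact hρσ a (hσq a ((h.nonneg_left a).lt_of_ne' hqa)) ha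
  · by_contra hgb
    obtain ⟨a, ha⟩ := hρτ b (mem_univ b) (hτg b ((h.nonneg_right b).lt_of_ne' hgb))
    exact hb a ha

end Fintype

end

theorem unitDemand_sub_sum_le {M : Type*} {v : Finset M → ℝ} {vv : M → ℝ} (hv0 : v ∅ = 0)
    (hv : ∀ (T : Finset M) (h : T.Nonempty), v T = T.sup' h vv) {p : M → ℝ}
    (hp : ∀ j, 0 ≤ p j) {c : ℝ} (hc : 0 ≤ c) (hvc : ∀ j, vv j ≤ c + p j) (X : Finset M) :
    v X - ∑ j ∈ X, p j ≤ c := by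
  rcases X.eq_empty_or_nonempty with rfl | hX
  · simpa [hv0] using hc
  · obtain ⟨j, hjX, hj⟩ := exists_mem_eq_sup' hX vv
    rw [hv X hX, hj]
    linarith [hvc j, single_le_sum (fun j _ => hp j) hjX]

theorem unit_demand_walrasian_exists_general {N M : Type*}
    [Fintype N] [Fintype M]
    (vv : N → M → ℝ)
    (v : N → Finset M → ℝ)
    (hv0 : ∀ i, v i ∅ = 0)
    (hv : ∀ i (T : Finset M) (h : T.Nonempty), v i T = T.sup' h (vv i)) :
    ∃ (S : N → Finset M) (p : M → ℝ),
      -- `S` is an allocation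
      (∀ i i', i ≠ i' → Disjoint (S i) (S i')) ∧
      -- `p` is a nonnegative pricing
      (∀ j, 0 ≤ p j) ∧
      -- condition (1): every agent's bundle maximizes her utility
      (∀ i (X : Finset M), v i X - ∑ j ∈ X, p j ≤ v i (S i) - ∑ j ∈ S i, p j) ∧
      -- condition (2): unallocated items have price zero
      (∀ j : M, (∀ i, j ∉ S i) → p j = 0) := by
  obtain ⟨u, p, hmin⟩ := exists_isMinWeightedCover vv
  obtain ⟨ρ, hρ, hρu, hρp⟩ := hmin.exists_isMatching
  have hutility : ∀ i, v i (ρ i).toFinset - ∑ j ∈ (ρ i).toFinset, p j = u i := fun i => by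
    cases hi : ρ i with
    | none => simp [hv0, hρu i hi]
    | some j =>
      rw [Option.toFinset_some, hv i _ (singleton_nonempty j), sup'_singleton, sum_singleton]
      linarith [hρ.rel i j hi]
  refine ⟨fun i => (ρ i).toFinset, p, fun i i' hii' => ?_, hmin.nonneg_right,
    fun i X => ?_, fun j hj => hρp j fun i hi => hj i (by simp [hi])⟩
  · exact disjoint_left.2 fun j hj hj' =>
      hii' (hρ.inj i i' j (by simpa using hj) (by simpa using hj'))
  · rw [hutility]
    exact unitDemand_sub_sum_le (hv0 i) (hv i) hmin.nonneg_right (hmin.nonneg_left i)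
      (hmin.le_add i) X

/-- **Existence of Walrasian equilibria in unit-demand markets.** If every agent `i` has
the unit-demand valuation `v i T = max_{j ∈ T} vv i j` (with `v i ∅ = 0`) given by
nonnegative values `vv`, then there exist an allocation `S` and a nonnegative pricing `p`
forming a Walrasian equilibrium. -/
theorem unit_demand_walrasian_exists {N M : Type*}
    [Fintype N] [Fintype M] [DecidableEq M]
    (vv : N → M → ℝ) (hvv : ∀ i j, 0 ≤ vv i j)
    (v : N → Finset M → ℝ)
    (hv0 : ∀ i, v i ∅ = 0)
    (hv : ∀ i (T : Finset M) (h : T.Nonempty), v i T = T.sup' h (vv i)) :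
    ∃ (S : N → Finset M) (p : M → ℝ),
      -- `S` is an allocation
      (∀ i i', i ≠ i' → Disjoint (S i) (S i')) ∧
      -- `p` is a nonnegative pricing
      (∀ j, 0 ≤ p j) ∧
      -- condition (1): every agent's bundle maximizes her utility
      (∀ i (X : Finset M), v i X - ∑ j ∈ X, p j ≤ v i (S i) - ∑ j ∈ S i, p j) ∧
      -- condition (2): unallocated items have price zero
      (∀ j : M, (∀ i, j ∉ S i) → p j = 0) :=
  unit_demand_walrasian_exists_general vv v hv0 hv
end

section
/- Every monotone, normalized submodular valuation is XOS (fractionally subadditive): if M is a finite set of items and v : Finset M → ℝ satisfies v(∅) = 0, v(X) ≤ v(Y) whenever X ⊆ Y, and v(X) + v(Y) ≥ v(X ∪ Y) + v(X ∩ Y) for all X, Y ⊆ M, then there exists a nonempty finite family of vectors a_t : M → ℝ with a_t(j) ≥ 0 for all t, j such that v(X) = max_t ∑_{j∈X} a_t(j) for every X ⊆ M. -/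
/-!
Order the items by an injective ranking `r` and give each item `j` its marginal value on top of
the items ranked below it. By submodularity (diminishing returns) these marginals sum to at most
`v X` over any bundle `X`, and they telescope to exactly `v X` when `X` is an initial segment of
the ranking; monotonicity makes them nonnegative. Since every bundle is an initial segment of some
ranking, `v` is the maximum of the finitely many greedy vectors obtained this way.
-/

open Finset

section Greedy

variable {M : Type*} {α : Type*}

theorem sub_le_sub_of_submodular [DecidableEq M] (v : Finset M → ℝ)
    (hsubmod : ∀ X Y : Finset M, v (X ∪ Y) + v (X ∩ Y) ≤ v X + v Y)
    {A B : Finset M} {x : M} (hAB : A ⊆ B) (hxB : x ∉ B) :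
    v (insert x B) - v B ≤ v (insert x A) - v A := by
  have hunion : insert x A ∪ B = insert x B := by
    rw [insert_union, union_eq_right.mpr hAB]
  have hinter : insert x A ∩ B = A := by
    rw [insert_inter_of_notMem hxB, inter_eq_left.mpr hAB]
  have := hsubmod (insert x A) B
  rw [hunion, hinter] at this
  linarith

/-- Since `false < true`, the items of `X` are ranked before all others. -/
def rankFirst [DecidableEq M] (X : Finset M) (r : M → α) (j : M) : Bool ×ₗ α :=
  toLex (decide (j ∉ X), r j)

theorem rankFirst_injective [DecidableEq M] (X : Finset M) {r : M → α}
    (hr : Function.Injective r) : Function.Injective (rankFirst X r) := fun _ _ h =>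
  hr (congrArg Prod.snd (toLex.injective h))

variable [LinearOrder α] [Fintype M]

def rankedBelow (r : M → α) (j : M) : Finset M := {i | r i < r j}

theorem subset_rankedBelow {r : M → α} (hr : Function.Injective r) {a : M} {s : Finset M}
    (has : a ∉ s) (hmax : ∀ x ∈ s, r x ≤ r a) : s ⊆ rankedBelow r a := fun i hi => by
  simpa [rankedBelow] using (hmax i hi).lt_of_ne (hr.ne (ne_of_mem_of_not_mem hi has))

variable [DecidableEq M]

theorem rankedBelow_rankFirst_subset {X : Finset M} (r : M → α) {j : M} (hj : j ∈ X) :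
    rankedBelow (rankFirst X r) j ⊆ X := fun i hi => by
  by_contra hiX
  simp [rankedBelow, rankFirst, Prod.Lex.lt_iff, hj, hiX] at hi
  exact absurd hi (by decide)

noncomputable def greedyVector (v : Finset M → ℝ) (r : M → α) (j : M) : ℝ :=
  v (insert j (rankedBelow r j)) - v (rankedBelow r j)

theorem greedyVector_nonneg (v : Finset M → ℝ) (hmono : ∀ X Y : Finset M, X ⊆ Y → v X ≤ v Y)
    (r : M → α) (j : M) : 0 ≤ greedyVector v r j :=
  sub_nonneg.mpr (hmono _ _ (subset_insert _ _))

theorem sum_greedyVector_le (v : Finset M → ℝ) (hnorm : v ∅ = 0)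
    (hsubmod : ∀ X Y : Finset M, v (X ∪ Y) + v (X ∩ Y) ≤ v X + v Y)
    {r : M → α} (hr : Function.Injective r) (X : Finset M) :
    ∑ j ∈ X, greedyVector v r j ≤ v X := by
  induction X using Finset.induction_on_max_value r with
  | empty => simp [hnorm]
  | insert a s has hmax ih =>
    have hmarg : greedyVector v r a ≤ v (insert a s) - v s :=
      sub_le_sub_of_submodular v hsubmod (subset_rankedBelow hr has hmax)
        (by simp [rankedBelow])
    rw [sum_insert has]
    linarith

theorem sum_greedyVector_eq (v : Finset M → ℝ) (hnorm : v ∅ = 0)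
    {r : M → α} (hr : Function.Injective r) {X : Finset M}
    (hX : ∀ j ∈ X, rankedBelow r j ⊆ X) :
    ∑ j ∈ X, greedyVector v r j = v X := by
  induction X using Finset.induction_on_max_value r with
  | empty => simp [hnorm]
  | insert a s has hmax ih =>
    have hbelow_a : rankedBelow r a = s := by
      refine (subset_rankedBelow hr has hmax).antisymm' fun i hi => ?_
      have hia : i ≠ a := fun h => by simp [rankedBelow, h] at hi
      simpa [hia] using hX a (mem_insert_self a s) hi
    have hs : ∀ j ∈ s, rankedBelow r j ⊆ s := fun j hj i hi => by
      have hia : i ≠ a := fun h => by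
        simp only [rankedBelow, mem_filter, mem_univ, true_and, h] at hi
        exact (hmax j hj).not_gt hi
      simpa [hia] using hX j (mem_insert_of_mem hj) hi
    rw [sum_insert has, ih hs, greedyVector, hbelow_a]
    ring

end Greedy

/-- Every monotone, normalized submodular valuation is XOS (fractionally subadditive):
there is a nonempty finite family of nonnegative additive vectors whose pointwise
maximum of bundle sums equals `v` on every bundle. -/
theorem submodular_is_xos {M : Type*} [Fintype M] [DecidableEq M]
    (v : Finset M → ℝ)
    (hnorm : v ∅ = 0)
    (hmono : ∀ X Y : Finset M, X ⊆ Y → v X ≤ v Y)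
    (hsubmod : ∀ X Y : Finset M, v (X ∪ Y) + v (X ∩ Y) ≤ v X + v Y) :
    ∃ (A : Finset (M → ℝ)) (hA : A.Nonempty),
      (∀ a ∈ A, ∀ j, 0 ≤ a j) ∧
      ∀ X : Finset M, v X = A.sup' hA (fun a => ∑ j ∈ X, a j) := by
  have he : Function.Injective (Fintype.equivFin M) := (Fintype.equivFin M).injective
  let ranking (X : Finset M) := rankFirst X (Fintype.equivFin M)
  refine ⟨univ.image fun X => greedyVector v (ranking X), univ_nonempty.image _,
    forall_mem_image.2 fun X _ => greedyVector_nonneg v hmono (ranking X),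
    fun X => le_antisymm ?_ ?_⟩
  · calc v X = ∑ j ∈ X, greedyVector v (ranking X) j :=
          (sum_greedyVector_eq v hnorm (rankFirst_injective X he)
            fun _ hj => rankedBelow_rankFirst_subset _ hj).symm
      _ ≤ _ := le_sup' (fun a : M → ℝ => ∑ j ∈ X, a j)
          (mem_image_of_mem (fun X => greedyVector v (ranking X)) (mem_univ X))
  · exact sup'_le _ _ <| forall_mem_image.2 fun S _ =>
      sum_greedyVector_le v hnorm hsubmod (rankFirst_injective S he) X
end
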